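/- Let m be a measure of granularity of sets on U. For attribute subsets P, Q ⊆ C with Q ⊆ P, one has Gη_P ≥ Gη_Q and Gμ_P ≤ Gμ_Q, where for R ⊆ C we set Gη_R = EG_m(Π_1) − (1 − η_R)·EG_m(U/IND(R)) and Gμ_R = μ_R·EG_m(U/IND(R)). -/
import Mathlib


/-- The indiscernibility class `[x]_R` of `x` for the attribute subset `R`:
all objects agreeing with `x` on every attribute in `R`. -/
def cls {U V A : Type*} (f : A → U → V) (R : Finset A) (x : U) : Set U :=
  {y | ∀ a ∈ R, f a x = f a y}

/-- Classical lower approximation of `X` with respect to `IND(R)`. -/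
def lowerA {U V A : Type*} (f : A → U → V) (R : Finset A) (X : Set U) : Set U :=
  {x | cls f R x ⊆ X}

/-- Classical upper approximation of `X` with respect to `IND(R)`. -/
def upperA {U V A : Type*} (f : A → U → V) (R : Finset A) (X : Set U) : Set U :=
  {x | (cls f R x ∩ X).Nonempty}

/-- α-probabilistic lower approximation: `{x | |[x]_R ∩ X| ≥ α·|[x]_R|}`. -/
noncomputable def aprLow {U V A : Type*} (f : A → U → V) (R : Finset A) (α : ℝ)
    (X : Set U) : Set U :=
  {x | α * ((cls f R x).ncard : ℝ) ≤ (((cls f R x) ∩ X).ncard : ℝ)}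

/-- β-probabilistic upper approximation: `{x | |[x]_R ∩ X| > β·|[x]_R|}`. -/
noncomputable def aprUp {U V A : Type*} (f : A → U → V) (R : Finset A) (β : ℝ)
    (X : Set U) : Set U :=
  {x | β * ((cls f R x).ncard : ℝ) < (((cls f R x) ∩ X).ncard : ℝ)}

/-- `η_R = (Σ_{i=1}^M |lower_R(apr_C^α(Y_i))|)/(|U|·M)`, the sum running over the
decision classes `Y_i = d⁻¹(v)`, `v ∈ d(U)`. -/
noncomputable def eta {U V A : Type*} [Fintype U] [DecidableEq V] (f : A → U → V)
    (C : Finset A) (d : U → V) (α : ℝ) (R : Finset A) : ℝ :=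
  (∑ v ∈ Finset.univ.image d,
      ((lowerA f R (aprLow f C α (d ⁻¹' {v}))).ncard : ℝ)) /
    ((Fintype.card U : ℝ) * ((Finset.univ.image d).card : ℝ))

/-- `μ_R = (Σ_{i=1}^M |upper_R(Apr_C^β(Y_i))|)/(|U|·M)`, the sum running over the
decision classes `Y_i = d⁻¹(v)`, `v ∈ d(U)`. -/
noncomputable def mu {U V A : Type*} [Fintype U] [DecidableEq V] (f : A → U → V)
    (C : Finset A) (d : U → V) (β : ℝ) (R : Finset A) : ℝ :=
  (∑ v ∈ Finset.univ.image d,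
      ((upperA f R (aprUp f C β (d ⁻¹' {v}))).ncard : ℝ)) /
    ((Fintype.card U : ℝ) * ((Finset.univ.image d).card : ℝ))

/-- A measure of granularity of sets on `U`: nonnegative, strictly monotone with
respect to strict inclusion, and invariant under cardinality. -/
def IsGranularityMeasure {U : Type*} [Fintype U] (m : Set U → ℝ) : Prop :=
  (∀ X : Set U, 0 ≤ m X) ∧
  (∀ X Y : Set U, X ⊂ Y → m X < m Y) ∧
  (∀ X Y : Set U, X.ncard = Y.ncard → m X = m Y)

/-- Expected granularity `EG_m(π) = Σ_{X ∈ π} m(X)·(|X|/|U|)`. -/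
noncomputable def EG {U : Type*} [Fintype U] (m : Set U → ℝ) (π : Finset (Set U)) : ℝ :=
  ∑ X ∈ π, m X * ((X.ncard : ℝ) / (Fintype.card U : ℝ))

/-- The partition `U/IND(R)` of `U` into the `IND(R)`-classes. -/
noncomputable def partitionOf {U V A : Type*} [Fintype U] (f : A → U → V)
    (R : Finset A) : Finset (Set U) :=
  haveI := Classical.decEq (Set U)
  Finset.univ.image (fun x : U => cls f R x)

/-- `Gη_R = EG_m(Π_1) − (1 − η_R)·EG_m(U/IND(R))`, where `Π_1 = {U}`. -/
noncomputable def Geta {U V A : Type*} [Fintype U] [DecidableEq V] (m : Set U → ℝ)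
    (f : A → U → V) (C : Finset A) (d : U → V) (α : ℝ) (R : Finset A) : ℝ :=
  EG m ({Set.univ} : Finset (Set U)) - (1 - eta f C d α R) * EG m (partitionOf f R)

/-- `Gμ_R = μ_R·EG_m(U/IND(R))`. -/
noncomputable def Gmu {U V A : Type*} [Fintype U] [DecidableEq V] (m : Set U → ℝ)
    (f : A → U → V) (C : Finset A) (d : U → V) (β : ℝ) (R : Finset A) : ℝ :=
  mu f C d β R * EG m (partitionOf f R)

lemma cls_refl {U V A : Type*} (f : A → U → V) (R : Finset A) (x : U) :
    x ∈ cls f R x := fun _ _ => rfl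

lemma cls_eq_of_mem {U V A : Type*} (f : A → U → V) (R : Finset A) {x y : U}
    (h : y ∈ cls f R x) : cls f R y = cls f R x := by
  ext z
  constructor
  · intro hz a ha; exact (h a ha).trans (hz a ha)
  · intro hz a ha; exact (h a ha).symm.trans (hz a ha)

lemma cls_anti {U V A : Type*} (f : A → U → V) {P Q : Finset A} (hQP : Q ⊆ P)
    (x : U) : cls f P x ⊆ cls f Q x :=
  fun _ hy a ha => hy a (hQP ha)

lemma m_mono {U : Type*} [Fintype U] {m : Set U → ℝ} (hm : IsGranularityMeasure m)
    {X Y : Set U} (h : X ⊆ Y) : m X ≤ m Y := by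
  rcases h.ssubset_or_eq with h' | h'
  · exact (hm.2.1 X Y h').le
  · rw [h']

lemma EG_partition {U V A : Type*} [Fintype U] (m : Set U → ℝ) (f : A → U → V)
    (R : Finset A) :
    EG m (partitionOf f R) = (∑ x : U, m (cls f R x)) / (Fintype.card U : ℝ) := by
  classical
  have key : ∑ x : U, m (cls f R x)
      = ∑ X ∈ partitionOf f R, m X * (X.ncard : ℝ) := by
    unfold partitionOf
    rw [← Finset.sum_fiberwise_of_maps_to (g := fun x : U => cls f R x)
        (fun x _ => Finset.mem_image_of_mem _ (Finset.mem_univ x))]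
    refine Finset.sum_congr rfl ?_
    intro X hX
    obtain ⟨x₀, -, rfl⟩ := Finset.mem_image.mp hX
    have hfil : Finset.univ.filter (fun y => cls f R y = cls f R x₀)
        = (cls f R x₀).toFinset := by
      ext y
      simp only [Finset.mem_filter, Finset.mem_univ, true_and, Set.mem_toFinset]
      constructor
      · intro h; rw [← h]; exact cls_refl f R y
      · intro h; exact cls_eq_of_mem f R h
    calc ∑ y ∈ Finset.univ.filter (fun y => cls f R y = cls f R x₀), m (cls f R y)
        = ∑ _y ∈ Finset.univ.filter (fun y => cls f R y = cls f R x₀), m (cls f R x₀) := by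
          refine Finset.sum_congr rfl ?_
          intro y hy; rw [(Finset.mem_filter.mp hy).2]
      _ = _ := by
          rw [Finset.sum_const, hfil, Set.ncard_eq_toFinset_card', nsmul_eq_mul,
            mul_comm]
  unfold EG
  rw [key, Finset.sum_div]
  exact Finset.sum_congr rfl fun X _ => (mul_div_assoc _ _ _).symm

lemma EG_nonneg {U : Type*} [Fintype U] {m : Set U → ℝ} (hm : IsGranularityMeasure m)
    (π : Finset (Set U)) : 0 ≤ EG m π := by
  refine Finset.sum_nonneg fun X _ => ?_
  have := hm.1 X
  positivity

lemma EG_mono {U V A : Type*} [Fintype U] {m : Set U → ℝ}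
    (hm : IsGranularityMeasure m) (f : A → U → V) {P Q : Finset A} (hQP : Q ⊆ P) :
    EG m (partitionOf f P) ≤ EG m (partitionOf f Q) := by
  rw [EG_partition, EG_partition]
  have hc : (0:ℝ) ≤ (Fintype.card U : ℝ) := by positivity
  gcongr with x
  exact m_mono hm (cls_anti f hQP x)

lemma eta_mono {U V A : Type*} [Fintype U] [DecidableEq V] (f : A → U → V)
    (C : Finset A) (d : U → V) (α : ℝ) {P Q : Finset A} (hQP : Q ⊆ P) :
    eta f C d α Q ≤ eta f C d α P := by
  unfold eta
  have hc : (0:ℝ) ≤ (Fintype.card U : ℝ) * ((Finset.univ.image d).card : ℝ) := by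
    positivity
  refine div_le_div_of_nonneg_right (Finset.sum_le_sum fun v _ => ?_) hc
  have hsub : lowerA f Q (aprLow f C α (d ⁻¹' {v}))
      ⊆ lowerA f P (aprLow f C α (d ⁻¹' {v})) :=
    fun x hx => (cls_anti f hQP x).trans hx
  exact_mod_cast Set.ncard_le_ncard hsub (Set.toFinite _)

lemma mu_mono {U V A : Type*} [Fintype U] [DecidableEq V] (f : A → U → V)
    (C : Finset A) (d : U → V) (β : ℝ) {P Q : Finset A} (hQP : Q ⊆ P) :
    mu f C d β P ≤ mu f C d β Q := by
  unfold mu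
  have hc : (0:ℝ) ≤ (Fintype.card U : ℝ) * ((Finset.univ.image d).card : ℝ) := by
    positivity
  refine div_le_div_of_nonneg_right (Finset.sum_le_sum fun v _ => ?_) hc
  have hsub : upperA f P (aprUp f C β (d ⁻¹' {v}))
      ⊆ upperA f Q (aprUp f C β (d ⁻¹' {v})) :=
    fun x hx => hx.imp fun y hy => ⟨cls_anti f hQP x hy.1, hy.2⟩
  exact_mod_cast Set.ncard_le_ncard hsub (Set.toFinite _)

lemma eta_le_one {U V A : Type*} [Fintype U] [Nonempty U] [DecidableEq V]
    (f : A → U → V) (C : Finset A) (d : U → V) (α : ℝ) (R : Finset A) :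
    eta f C d α R ≤ 1 := by
  unfold eta
  have hM : 0 < ((Finset.univ.image d).card : ℝ) := by
    have : (Finset.univ.image d).Nonempty :=
      Finset.image_nonempty.mpr Finset.univ_nonempty
    exact_mod_cast Finset.card_pos.mpr this
  have hU : 0 < (Fintype.card U : ℝ) := by
    exact_mod_cast Fintype.card_pos
  rw [div_le_one (by positivity)]
  calc ∑ v ∈ Finset.univ.image d,
        ((lowerA f R (aprLow f C α (d ⁻¹' {v}))).ncard : ℝ)
      ≤ ∑ _v ∈ Finset.univ.image d, (Fintype.card U : ℝ) := by
        refine Finset.sum_le_sum fun v _ => ?_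
        have : (lowerA f R (aprLow f C α (d ⁻¹' {v}))).ncard ≤ Fintype.card U := by
          have h := Set.ncard_le_ncard (Set.subset_univ
            (lowerA f R (aprLow f C α (d ⁻¹' {v})))) Set.finite_univ
          rwa [Set.ncard_univ, Nat.card_eq_fintype_card] at h
        exact_mod_cast this
    _ = (Fintype.card U : ℝ) * ((Finset.univ.image d).card : ℝ) := by
        rw [Finset.sum_const, nsmul_eq_mul, mul_comm]

lemma mu_nonneg {U V A : Type*} [Fintype U] [DecidableEq V] (f : A → U → V)
    (C : Finset A) (d : U → V) (β : ℝ) (R : Finset A) : 0 ≤ mu f C d β R := by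
  unfold mu
  positivity
theorem Geta_Gmu_monotone_of_subset {U V A : Type*} [Fintype U] [Nonempty U]
    [DecidableEq V] (m : Set U → ℝ) (hm : IsGranularityMeasure m)
    (f : A → U → V) (C : Finset A) (d : U → V)
    (α β : ℝ) (hβ0 : 0 ≤ β) (hβα : β < α) (hα1 : α ≤ 1)
    (P Q : Finset A) (hP : P ⊆ C) (hQ : Q ⊆ C) (hQP : Q ⊆ P) :
    Geta m f C d α Q ≤ Geta m f C d α P ∧ Gmu m f C d β P ≤ Gmu m f C d β Q := by
  constructor
  · unfold Geta
    apply sub_le_sub_left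
    have hEG := EG_mono hm f hQP
    have hEGP := EG_nonneg hm (partitionOf f P)
    have heta := eta_mono f C d α hQP
    have h1 : eta f C d α Q ≤ 1 := eta_le_one f C d α Q
    exact mul_le_mul (by linarith : 1 - eta f C d α P ≤ 1 - eta f C d α Q)
      hEG hEGP (by linarith)
  · unfold Gmu
    exact mul_le_mul (mu_mono f C d β hQP) (EG_mono hm f hQP)
      (EG_nonneg hm (partitionOf f P)) (mu_nonneg f C d β Q)
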